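/- Any probability distribution P(x,y) on ℝ² satisfying P(x,y) = P(-x,-y)e^x with finite second moment of y obeys Var(y) ≥ ⟨y⟩²·f(⟨x⟩), where f(x) = csch²(g(x/2)) and g is the inverse of t ↦ t·tanh(t) on [0,∞). -/

import Mathlib

/-!
Averages against `μ` can be symmetrized: by the fluctuation relation, `∫ f dμ` equals the
integral of `(f(z) + e^{-x} f(-z)) / 2`, i.e. an integral against the symmetrized probability
`ν = (μ + μ∘neg) / 2 = ((1 + e^{-x}) / 2) μ`. Since `1 - e^{-x} = tanh (x/2) (1 + e^{-x})`,
this turns `⟨y²⟩`, `⟨y⟩` and `⟨x⟩/2` into `ν[y²]`, `ν[y tanh (x/2)]` and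
`ν[(x/2) tanh (x/2)]`. Cauchy–Schwarz under `ν` gives `⟨y⟩² ≤ ⟨y²⟩ ν[tanh² (x/2)]`. As a
function of `s = t tanh t`, `tanh² t` is concave, so by Jensen `ν[tanh² (x/2)] ≤ tanh² u` where
`u tanh u = ⟨x⟩/2`, i.e. `u = g (⟨x⟩/2)`. Finally `⟨y⟩² ≤ ⟨y²⟩ tanh² u` rearranges to
`⟨y²⟩ - ⟨y⟩² ≥ ⟨y⟩² csch² u`.
-/

open MeasureTheory Real Set

namespace Real

lemma hasDerivAt_tanh (x : ℝ) : HasDerivAt tanh (1 / cosh x ^ 2) x := by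
  have h := (hasDerivAt_sinh x).div (hasDerivAt_cosh x) (cosh_pos x).ne'
  rw [show sinh / cosh = tanh from funext fun y => (tanh_eq_sinh_div_cosh y).symm] at h
  refine h.congr_deriv ?_
  rw [← cosh_sq_sub_sinh_sq x]
  ring

@[fun_prop]
lemma continuous_tanh : Continuous tanh :=
  continuous_iff_continuousAt.2 fun x => (hasDerivAt_tanh x).continuousAt

lemma tanh_nonneg {t : ℝ} (ht : 0 ≤ t) : 0 ≤ tanh t := by
  rw [tanh_eq_sinh_div_cosh]
  exact div_nonneg (sinh_nonneg_iff.2 ht) (cosh_pos t).le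

lemma tanh_le_self {t : ℝ} (ht : 0 ≤ t) : tanh t ≤ t := by
  have h := image_sub_le_mul_sub_of_deriv_le (f := tanh) (C := 1)
    (fun x => (hasDerivAt_tanh x).differentiableAt)
    (fun x => by
      rw [(hasDerivAt_tanh x).deriv, div_le_one (by positivity)]
      nlinarith [cosh_sq_sub_sinh_sq x, sq_nonneg (sinh x)]) ht
  simpa using h

lemma tanh_sq_le_mul_tanh {t : ℝ} (ht : 0 ≤ t) : tanh t ^ 2 ≤ t * tanh t := by
  rw [sq]
  exact mul_le_mul_of_nonneg_right (tanh_le_self ht) (tanh_nonneg ht)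

lemma mul_tanh_nonneg (t : ℝ) : 0 ≤ t * tanh t := by
  rcases le_total 0 t with ht | ht
  · exact mul_nonneg ht (tanh_nonneg ht)
  · have := tanh_nonneg (neg_nonneg.2 ht)
    rw [tanh_neg] at this
    nlinarith

lemma tanh_half_mul_one_add_exp_neg (x : ℝ) :
    tanh (x / 2) * (1 + exp (-x)) = 1 - exp (-x) := by
  have hx : exp (-x) = exp (-(x / 2)) ^ 2 := by rw [← exp_nat_mul]; ring_nf
  rw [tanh_eq_sinh_div_cosh, sinh_eq, cosh_eq, hx]
  have h1 : exp (x / 2) * exp (-(x / 2)) = 1 := by rw [← exp_add]; simp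
  have h2 : 0 < exp (x / 2) + exp (-(x / 2)) := by positivity
  field_simp
  linear_combination (2 * exp (-(x / 2))) * h1

lemma hasDerivAt_cosh_sq_add_mul_coth {x : ℝ} (hx : 0 < x) :
    HasDerivAt (fun t => cosh t ^ 2 + t * cosh t / sinh t)
      (2 * sinh x * cosh x + (sinh x * cosh x - x) / sinh x ^ 2) x := by
  have hs : sinh x ≠ 0 := (sinh_pos_iff.2 hx).ne'
  refine (((hasDerivAt_cosh x).pow 2).add
    (((hasDerivAt_id' x).mul (hasDerivAt_cosh x)).div (hasDerivAt_sinh x) hs)).congr_deriv ?_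
  simp only [Pi.mul_apply]
  field_simp
  linear_combination (-x) * cosh_sq_sub_sinh_sq x

lemma monotoneOn_cosh_sq_add_mul_coth :
    MonotoneOn (fun t => cosh t ^ 2 + t * cosh t / sinh t) (Ioi 0) := by
  refine monotoneOn_of_deriv_nonneg (convex_Ioi 0)
    (fun x hx => (hasDerivAt_cosh_sq_add_mul_coth hx).continuousAt.continuousWithinAt)
    (fun x hx => ?_) (fun x hx => ?_) <;> rw [interior_Ioi] at hx
  · exact (hasDerivAt_cosh_sq_add_mul_coth hx).differentiableAt.differentiableWithinAt
  · rw [(hasDerivAt_cosh_sq_add_mul_coth hx).deriv]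
    have hs := sinh_pos_iff.2 hx
    have : x ≤ sinh x * cosh x := by
      nlinarith [(self_lt_sinh_iff.2 hx).le, one_le_cosh x]
    have := cosh_pos x
    positivity

lemma tanh_sq_le_tangent {u t : ℝ} (hu : 0 < u) (ht : 0 ≤ t) :
    tanh t ^ 2 ≤ tanh u ^ 2
      + 2 / (cosh u ^ 2 + u * cosh u / sinh u) * (t * tanh t - u * tanh u) := by
  set P : ℝ → ℝ := fun t => cosh t ^ 2 + t * cosh t / sinh t
  set c := 2 / P u
  set G : ℝ → ℝ := fun x => c * (x * tanh x) - tanh x ^ 2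
  have hPpos : ∀ x, 0 < x → 0 < P x := fun x hx => by
    have := sinh_pos_iff.2 hx; have := cosh_pos x; positivity
  have hderiv : ∀ x, HasDerivAt G
      (c * (1 * tanh x + x * (1 / cosh x ^ 2)) - 2 * tanh x ^ 1 * (1 / cosh x ^ 2)) x :=
    fun x => (((hasDerivAt_id' x).mul (hasDerivAt_tanh x)).const_mul c).sub
      ((hasDerivAt_tanh x).pow 2)
  -- `2 / P x` is the slope of `tanh ^ 2` against `t * tanh t` at `t = x`.
  have hderiv_eq : ∀ x, 0 < x →
      deriv G x = (sinh x * cosh x + x) / cosh x ^ 2 * (c - 2 / P x) := fun x hx => by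
    have := sinh_pos_iff.2 hx
    have := cosh_pos x
    rw [(hderiv x).deriv, tanh_eq_sinh_div_cosh]
    simp only [P]
    field_simp
  have hfactor : ∀ x, 0 < x → 0 ≤ (sinh x * cosh x + x) / cosh x ^ 2 := fun x hx => by
    have := sinh_pos_iff.2 hx; have := cosh_pos x; positivity
  have hmin : IsMinOn G (Ici 0) u := by
    refine isMinOn_Ici_of_deriv (hderiv 0).continuousAt (hderiv u).continuousAt
      (fun x _ => (hderiv x).differentiableAt.differentiableWithinAt)
      (fun x _ => (hderiv x).differentiableAt.differentiableWithinAt)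
      (fun x hx => ?_) (fun x hx => ?_)
    · have hPx : P x ≤ P u := monotoneOn_cosh_sq_add_mul_coth hx.1 hu hx.2.le
      rw [hderiv_eq x hx.1]
      exact mul_nonpos_of_nonneg_of_nonpos (hfactor x hx.1)
        (sub_nonpos.2 (div_le_div_of_nonneg_left zero_le_two (hPpos x hx.1) hPx))
    · have hx0 : 0 < x := hu.trans hx
      have hPx : P u ≤ P x := monotoneOn_cosh_sq_add_mul_coth hu hx0 (le_of_lt hx)
      rw [hderiv_eq x hx0]
      exact mul_nonneg (hfactor x hx0)
        (sub_nonneg.2 (div_le_div_of_nonneg_left zero_le_two (hPpos u hu) hPx))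
  have hGu : G u ≤ G t := hmin (mem_Ici.2 ht)
  simp only [G] at hGu
  linarith

lemma exists_tanh_sq_le_tangent {u : ℝ} (hu : 0 ≤ u) :
    ∃ c, ∀ t, tanh t ^ 2 ≤ tanh u ^ 2 + c * (t * tanh t - u * tanh u) := by
  have heven : ∀ t, tanh t ^ 2 = tanh |t| ^ 2 ∧ t * tanh t = |t| * tanh |t| := fun t => by
    rcases abs_choice t with h | h <;> rw [h] <;> simp [tanh_neg]
  rcases hu.eq_or_lt with rfl | hu
  · refine ⟨1, fun t => ?_⟩
    rw [(heven t).1, (heven t).2]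
    simpa using tanh_sq_le_mul_tanh (abs_nonneg t)
  · refine ⟨2 / (cosh u ^ 2 + u * cosh u / sinh u), fun t => ?_⟩
    rw [(heven t).1, (heven t).2]
    exact tanh_sq_le_tangent hu (abs_nonneg t)

lemma sq_mul_one_div_sinh_sq_le_sub_sq {Y m u : ℝ} (hY : 0 ≤ Y)
    (h : m ^ 2 ≤ Y * tanh u ^ 2) : m ^ 2 * (1 / sinh u) ^ 2 ≤ Y - m ^ 2 := by
  rcases eq_or_ne (sinh u) 0 with hs | hs
  · have hm : m ^ 2 ≤ 0 := by simpa [tanh_eq_sinh_div_cosh, hs] using h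
    rw [hs]
    nlinarith [sq_nonneg m]
  · have hc := cosh_pos u
    rw [tanh_eq_sinh_div_cosh, div_pow, mul_div_assoc', le_div_iff₀ (by positivity)] at h
    rw [div_pow, one_pow, ← div_eq_mul_one_div, div_le_iff₀ (by positivity)]
    nlinarith [cosh_sq_sub_sinh_sq u]

end Real

section Integrals

variable {α : Type*} [MeasurableSpace α]

lemma sq_integral_mul_le_integral_sq_mul_integral_sq {ν : Measure α} {f g : α → ℝ}
    (hf : Integrable (fun z => f z ^ 2) ν) (hg : Integrable (fun z => g z ^ 2) ν)
    (hfg : Integrable (fun z => f z * g z) ν) :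
    (∫ z, f z * g z ∂ν) ^ 2 ≤ (∫ z, f z ^ 2 ∂ν) * ∫ z, g z ^ 2 ∂ν := by
  have hquad : ∀ s : ℝ, 0 ≤ (∫ z, g z ^ 2 ∂ν) * (s * s) + (-2 * ∫ z, f z * g z ∂ν) * s
      + ∫ z, f z ^ 2 ∂ν := fun s => by
    have hexp : ∀ z, (f z - s * g z) ^ 2 = f z ^ 2 - 2 * s * (f z * g z) + s ^ 2 * g z ^ 2 :=
      fun z => by ring
    have h := integral_nonneg (μ := ν) (f := fun z => (f z - s * g z) ^ 2) fun z => sq_nonneg _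
    have hint : Integrable (fun z => f z ^ 2 - 2 * s * (f z * g z)) ν := hf.sub (hfg.const_mul _)
    simp only [hexp] at h
    rw [integral_add hint (hg.const_mul _), integral_sub hf (hfg.const_mul _),
      integral_const_mul, integral_const_mul] at h
    linarith
  have := discrim_le_zero hquad
  rw [discrim] at this
  linarith

lemma integral_tanh_sq_le {ν : Measure α} [IsProbabilityMeasure ν] {a : α → ℝ}
    (ha : Integrable (fun z => a z * tanh (a z)) ν) {u : ℝ} (hu0 : 0 ≤ u)
    (hu : u * tanh u = ∫ z, a z * tanh (a z) ∂ν) :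
    ∫ z, tanh (a z) ^ 2 ∂ν ≤ tanh u ^ 2 := by
  obtain ⟨c, hc⟩ := exists_tanh_sq_le_tangent hu0
  have hsub : Integrable (fun z => a z * tanh (a z) - u * tanh u) ν := ha.sub (integrable_const _)
  calc ∫ z, tanh (a z) ^ 2 ∂ν
      ≤ ∫ z, tanh u ^ 2 + c * (a z * tanh (a z) - u * tanh u) ∂ν :=
        integral_mono_of_nonneg (ae_of_all _ fun z => sq_nonneg _)
          ((integrable_const _).add (hsub.const_mul c)) (ae_of_all _ fun z => hc (a z))
    _ = tanh u ^ 2 := by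
        rw [integral_add (integrable_const _) (hsub.const_mul c), integral_const_mul,
          integral_sub ha (integrable_const _), ← hu]
        simp

/-- When `μ.map σ = μ.withDensity ρ`, this is the symmetrization `(μ + μ.map σ) / 2` of `μ`. -/
noncomputable def symmetrization (μ : Measure α) (ρ : α → ℝ) : Measure α :=
  μ.withDensity fun z => ENNReal.ofReal ((1 + ρ z) / 2)

variable {μ : Measure α} {ρ : α → ℝ} {σ : α → α}

lemma integral_withDensity_ofReal (hρ : Measurable ρ) (hρ0 : ∀ z, 0 ≤ ρ z) (f : α → ℝ) :
    ∫ z, f z ∂μ.withDensity (fun z => ENNReal.ofReal (ρ z)) = ∫ z, ρ z * f z ∂μ := by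
  rw [integral_withDensity_eq_integral_toReal_smul hρ.ennreal_ofReal
    (ae_of_all _ fun _ => ENNReal.ofReal_lt_top)]
  simp only [ENNReal.toReal_ofReal (hρ0 _), smul_eq_mul]

lemma integrable_withDensity_ofReal_iff (hρ : Measurable ρ) (hρ0 : ∀ z, 0 ≤ ρ z) {f : α → ℝ} :
    Integrable f (μ.withDensity fun z => ENNReal.ofReal (ρ z)) ↔
      Integrable (fun z => ρ z * f z) μ := by
  rw [integrable_withDensity_iff_integrable_smul' hρ.ennreal_ofReal
    (ae_of_all _ fun _ => ENNReal.ofReal_lt_top)]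
  simp only [ENNReal.toReal_ofReal (hρ0 _), smul_eq_mul]

lemma integral_comp_eq_integral_mul (hσ : Measurable σ) (hρ : Measurable ρ)
    (hρ0 : ∀ z, 0 ≤ ρ z) (hsym : μ.map σ = μ.withDensity fun z => ENNReal.ofReal (ρ z))
    {f : α → ℝ} (hf : Measurable f) :
    ∫ z, f (σ z) ∂μ = ∫ z, ρ z * f z ∂μ := by
  rw [← integral_map hσ.aemeasurable hf.aestronglyMeasurable, hsym,
    integral_withDensity_ofReal hρ hρ0]

lemma integrable_mul_of_integrable_comp (hσ : Measurable σ) (hρ : Measurable ρ)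
    (hρ0 : ∀ z, 0 ≤ ρ z) (hsym : μ.map σ = μ.withDensity fun z => ENNReal.ofReal (ρ z))
    {f : α → ℝ} (hf : Measurable f) (hfσ : Integrable (fun z => f (σ z)) μ) :
    Integrable (fun z => ρ z * f z) μ := by
  rwa [← integrable_withDensity_ofReal_iff hρ hρ0, ← hsym,
    integrable_map_measure hf.aestronglyMeasurable hσ.aemeasurable]

lemma integrable_and_integral_symmetrization_eq (hσ : Measurable σ) (hρ : Measurable ρ)
    (hρ0 : ∀ z, 0 ≤ ρ z) (hsym : μ.map σ = μ.withDensity fun z => ENNReal.ofReal (ρ z))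
    (hinv : Function.Involutive σ) {f φ : α → ℝ} (hf : Measurable f) (hfi : Integrable f μ)
    (hφ : ∀ z, (1 + ρ z) / 2 * φ z = (f z + ρ z * f (σ z)) / 2) :
    Integrable φ (symmetrization μ ρ) ∧ ∫ z, φ z ∂symmetrization μ ρ = ∫ z, f z ∂μ := by
  have hw : Measurable fun z => (1 + ρ z) / 2 := (measurable_const.add hρ).div_const 2
  have hw0 : ∀ z, 0 ≤ (1 + ρ z) / 2 := fun z => by linarith [hρ0 z]
  have hfσ : Measurable fun z => f (σ z) := hf.comp hσ
  have hρfσ : Integrable (fun z => ρ z * f (σ z)) μ :=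
    integrable_mul_of_integrable_comp hσ hρ hρ0 hsym hfσ (by simpa only [hinv _] using hfi)
  have hsum : Integrable (fun z => f z + ρ z * f (σ z)) μ := hfi.add hρfσ
  refine ⟨?_, ?_⟩
  · rw [symmetrization, integrable_withDensity_ofReal_iff hw hw0]
    simpa only [hφ] using hsum.div_const 2
  · rw [symmetrization, integral_withDensity_ofReal hw hw0]
    simp only [hφ]
    rw [integral_div, integral_add hfi hρfσ,
      ← integral_comp_eq_integral_mul hσ hρ hρ0 hsym hfσ]
    simp only [hinv _]
    ring

lemma isProbabilityMeasure_symmetrization [IsProbabilityMeasure μ] (hσ : Measurable σ)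
    (hρ : Measurable ρ) (hρ0 : ∀ z, 0 ≤ ρ z)
    (hsym : μ.map σ = μ.withDensity fun z => ENNReal.ofReal (ρ z))
    (hinv : Function.Involutive σ) :
    IsProbabilityMeasure (symmetrization μ ρ) := by
  obtain ⟨hint, hone⟩ := integrable_and_integral_symmetrization_eq hσ hρ hρ0 hsym hinv
    (f := fun _ => 1) (φ := fun _ => 1) measurable_const (integrable_const 1) fun z => by ring
  have : IsFiniteMeasure (symmetrization μ ρ) :=
    (integrable_const_iff.1 hint).resolve_left one_ne_zero
  constructor
  simpa [measureReal_def, ENNReal.toReal_eq_one_iff] using hone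

end Integrals

/-- Any probability distribution on ℝ² satisfying the exchange fluctuation theorem
symmetry `P(x,y) = P(-x,-y) e^x` (expressed as: the pushforward under negation equals
the original measure with density `e^{-x}`) and having a finite second moment of `y`
obeys the generalized TUR `Var(y) ≥ ⟨y⟩² f(⟨x⟩)`, where `f x = csch²(g (x/2))` and
`g` is the inverse of `t ↦ t tanh t` on `[0, ∞)`. -/
theorem generalized_TUR
    (g : ℝ → ℝ)
    (hg : ∀ x ∈ Set.Ici (0 : ℝ), g x ∈ Set.Ici (0 : ℝ) ∧ g x * Real.tanh (g x) = x)
    (μ : Measure (ℝ × ℝ)) [IsProbabilityMeasure μ]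
    (hsym : μ.map (fun z : ℝ × ℝ => (-z.1, -z.2))
      = μ.withDensity (fun z => ENNReal.ofReal (Real.exp (-z.1))))
    (hx : Integrable (fun z : ℝ × ℝ => z.1) μ)
    (hy2 : Integrable (fun z : ℝ × ℝ => z.2 ^ 2) μ) :
    (∫ z : ℝ × ℝ, z.2 ^ 2 ∂μ) - (∫ z : ℝ × ℝ, z.2 ∂μ) ^ 2
      ≥ (∫ z : ℝ × ℝ, z.2 ∂μ) ^ 2
        * (1 / Real.sinh (g ((∫ z : ℝ × ℝ, z.1 ∂μ) / 2))) ^ 2 := by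
  have hσ : Measurable fun z : ℝ × ℝ => (-z.1, -z.2) := by fun_prop
  have hinv : Function.Involutive fun z : ℝ × ℝ => (-z.1, -z.2) := fun z => by simp
  have hρ : Measurable fun z : ℝ × ℝ => exp (-z.1) := by fun_prop
  have hρ0 : ∀ z : ℝ × ℝ, 0 ≤ exp (-z.1) := fun z => (exp_pos _).le
  have hν := isProbabilityMeasure_symmetrization hσ hρ hρ0 hsym hinv
  have hy : Integrable (fun z : ℝ × ℝ => z.2) μ :=
    ((memLp_two_iff_integrable_sq (by fun_prop)).2 hy2).integrable one_le_two
  obtain ⟨hy2ν, hY⟩ := integrable_and_integral_symmetrization_eq hσ hρ hρ0 hsym hinv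
    (φ := fun z => z.2 ^ 2) (by fun_prop) hy2 fun z => by ring
  obtain ⟨hyν, hm⟩ := integrable_and_integral_symmetrization_eq hσ hρ hρ0 hsym hinv
    (φ := fun z => z.2 * tanh (z.1 / 2)) measurable_snd hy fun z => by
      linear_combination (z.2 / 2) * tanh_half_mul_one_add_exp_neg z.1
  obtain ⟨hxν, hS⟩ := integrable_and_integral_symmetrization_eq hσ hρ hρ0 hsym hinv
    (φ := fun z => z.1 / 2 * tanh (z.1 / 2)) (by fun_prop) (hx.div_const 2) fun z => by
      linear_combination (z.1 / 4) * tanh_half_mul_one_add_exp_neg z.1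
  rw [integral_div] at hS
  obtain ⟨hu0, hu⟩ := hg _ (hS ▸ integral_nonneg fun z => mul_tanh_nonneg _)
  have hT := integral_tanh_sq_le hxν hu0 (hu.trans hS.symm)
  have htanh : Integrable (fun z : ℝ × ℝ => tanh (z.1 / 2) ^ 2)
      (symmetrization μ fun z => exp (-z.1)) :=
    (integrable_const 1).mono' (by fun_prop)
      (ae_of_all _ fun z => by simpa using (tanh_sq_lt_one (z.1 / 2)).le)
  have hCS := sq_integral_mul_le_integral_sq_mul_integral_sq hy2ν htanh hyν
  rw [hY, hm] at hCS
  exact sq_mul_one_div_sinh_sq_le_sub_sq (integral_nonneg fun z => sq_nonneg _)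
    (hCS.trans (mul_le_mul_of_nonneg_left hT (integral_nonneg fun z => sq_nonneg _)))
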